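/- Let D : E ⇀ F and D' : E' ⇀ F' be closed densely defined operators between Hilbert spaces, let U : E → E' and V : F → F' be bounded invertible operators such that U maps a core 𝓔 of D onto a core of D', and suppose (D'U − VD)(1+D*D)^{-1/2} extends to a compact operator from E to F'. Then U restricts to a bounded invertible operator from Dom(D) (with graph norm) onto Dom(D') (with graph norm). -/

import Mathlib

open Filter Topology

set_option linter.unusedSectionVars false
set_option maxHeartbeats 1000000

noncomputable section

variable {E E' F F' : Type*}
  [NormedAddCommGroup E] [InnerProductSpace ℂ E] [CompleteSpace E]
  [NormedAddCommGroup E'] [InnerProductSpace ℂ E'] [CompleteSpace E']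
  [NormedAddCommGroup F] [InnerProductSpace ℂ F] [CompleteSpace F]
  [NormedAddCommGroup F'] [InnerProductSpace ℂ F'] [CompleteSpace F']

/-- `R` is the bounded operator `(1 + D†D)^(-1/2)`. -/
structure IsSqrtResolvent (D : E →ₗ.[ℂ] F) (R : E →L[ℂ] E) : Prop where
  mem : ∀ x, R x ∈ D.domain
  graph_isometry : ∀ x : E, ‖x‖ ^ 2 = ‖R x‖ ^ 2 + ‖D ⟨R x, mem x⟩‖ ^ 2
  surj : ∀ y ∈ D.domain, ∃ x, R x = y
  selfAdjoint : IsSelfAdjoint R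
  pos : ∀ x, 0 ≤ (inner ℂ (R x) x : ℂ).re

/-- A core of `D`: a subspace of the domain of `D` that is dense in the graph norm. -/
def IsCore (D : E →ₗ.[ℂ] F) (S : Submodule ℂ E) : Prop :=
  (S : Set E) ⊆ D.domain ∧
    ∀ x : D.domain, ∀ ε > (0 : ℝ), ∃ y : D.domain, (y : E) ∈ S ∧
      ‖(x : E) - y‖ < ε ∧ ‖D x - D y‖ < ε

private theorem pmap_congr (D : E →ₗ.[ℂ] F) (a : D.domain) {x : E} (hx : x ∈ D.domain)
    (h : (a : E) = x) : D a = D ⟨x, hx⟩ := by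
  congr 1
  exact Subtype.ext h

private theorem closed_limit {D : E →ₗ.[ℂ] F} (hD : D.IsClosed) (u : ℕ → D.domain) {x : E} {y : F}
    (hx : Tendsto (fun n => (u n : E)) atTop (𝓝 x))
    (hy : Tendsto (fun n => D (u n)) atTop (𝓝 y)) :
    ∃ hx' : x ∈ D.domain, D ⟨x, hx'⟩ = y := by
  have hxy : (x, y) ∈ D.graph :=
    hD.mem_of_tendsto (hx.prodMk_nhds hy) (Filter.Eventually.of_forall fun n => D.mem_graph (u n))
  rcases D.mem_graph_iff.mp hxy with ⟨⟨z, hz⟩, h1, h2⟩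
  dsimp at h1 h2
  subst h1
  exact ⟨hz, h2⟩

private theorem tendsto_of_norm_lt {G : Type*} [NormedAddCommGroup G] {f : ℕ → G} {a : G}
    (h : ∀ n, ‖a - f n‖ < 1 / ((n : ℝ) + 1)) : Tendsto f atTop (𝓝 a) := by
  rw [tendsto_iff_norm_sub_tendsto_zero]
  refine squeeze_zero (fun n => norm_nonneg _) (fun n => ?_) tendsto_one_div_add_atTop_nhds_zero_nat
  rw [norm_sub_rev]; exact (h n).le

private theorem one_div_succ_le {N n : ℕ} (h : N ≤ n) : 1 / ((n : ℝ) + 1) ≤ 1 / ((N : ℝ) + 1) := by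
  gcongr

/-- If `U`, `V` are bounded invertible operators, `U` maps a core of `D` onto a
core of `D'`, and `(D'U − VD)(1 + D†D)^(-1/2)` extends to a compact operator, then `U` restricts
to a bounded invertible operator from `Dom D` onto `Dom D'` (with graph norms). -/
theorem restricts_to_graph_isomorphism
    (D : E →ₗ.[ℂ] F) (D' : E' →ₗ.[ℂ] F')
    (hDdense : Dense (D.domain : Set E)) (hDclosed : D.IsClosed)
    (hD'dense : Dense (D'.domain : Set E')) (hD'closed : D'.IsClosed)
    (U : E ≃L[ℂ] E') (V : F ≃L[ℂ] F')
    (S : Submodule ℂ E) (hcore : IsCore D S)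
    (hcore' : IsCore D' (S.map (U.toLinearEquiv : E →ₗ[ℂ] E')))
    (R : E →L[ℂ] E) (hR : IsSqrtResolvent D R)
    (C : E →L[ℂ] F') (hC : IsCompactOperator ⇑C)
    (hext : ∀ (x : E) (h1 : R x ∈ D.domain) (h2 : U (R x) ∈ D'.domain),
      C x = D' ⟨U (R x), h2⟩ - V (D ⟨R x, h1⟩)) :
    (∀ x ∈ D.domain, U x ∈ D'.domain) ∧ (∀ y ∈ D'.domain, U.symm y ∈ D.domain) ∧
      ∃ c > (0 : ℝ), ∀ (x : E) (hx : x ∈ D.domain) (hx' : U x ∈ D'.domain),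
        ‖U x‖ + ‖D' ⟨U x, hx'⟩‖ ≤ c * (‖x‖ + ‖D ⟨x, hx⟩‖) ∧
        ‖x‖ + ‖D ⟨x, hx⟩‖ ≤ c * (‖U x‖ + ‖D' ⟨U x, hx'⟩‖) := by
  classical
  set M : ℝ := ‖(V : F →L[ℂ] F')‖ + ‖C‖ with hMdef
  have hM : 0 ≤ M := add_nonneg (norm_nonneg _) (norm_nonneg _)
  -- the key identity coming from the compact extension hypothesis
  have key : ∀ (a : D.domain) (ha : U (a : E) ∈ D'.domain), ∃ z : E,
      ‖z‖ ^ 2 = ‖(a : E)‖ ^ 2 + ‖D a‖ ^ 2 ∧ D' ⟨U (a : E), ha⟩ = V (D a) + C z := by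
    rintro ⟨x, hx⟩ ha
    obtain ⟨z, hz⟩ := hR.surj x hx
    subst hz
    refine ⟨z, hR.graph_isometry z, ?_⟩
    rw [hext z hx ha]
    abel
  -- forward bound on all of the domain where `U x` lies in the domain of `D'`
  have fwdB : ∀ (a : D.domain) (ha : U (a : E) ∈ D'.domain),
      ‖D' ⟨U (a : E), ha⟩‖ ≤ M * (‖(a : E)‖ + ‖D a‖) := by
    intro a ha
    obtain ⟨z, hz1, hz2⟩ := key a ha
    have hz3 : ‖z‖ ≤ ‖(a : E)‖ + ‖D a‖ := by
      nlinarith [norm_nonneg z, norm_nonneg ((a : E)), norm_nonneg (D a)]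
    have h1 : ‖V (D a)‖ ≤ ‖(V : F →L[ℂ] F')‖ * ‖D a‖ := (V : F →L[ℂ] F').le_opNorm _
    have h2 : ‖C z‖ ≤ ‖C‖ * ‖z‖ := C.le_opNorm z
    rw [hz2]
    calc ‖V (D a) + C z‖ ≤ ‖V (D a)‖ + ‖C z‖ := norm_add_le _ _
      _ ≤ M * (‖(a : E)‖ + ‖D a‖) := by
          nlinarith [norm_nonneg ((a : E)), norm_nonneg (D a),
            norm_nonneg (V : F →L[ℂ] F'), norm_nonneg C, norm_nonneg z]
  have memS : ∀ x ∈ S, U x ∈ D'.domain := fun x hx =>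
    hcore'.1 (Submodule.mem_map_of_mem (f := (U.toLinearEquiv : E →ₗ[ℂ] E')) hx)
  -- approximating sequences from the cores
  have coreSeq : ∀ x : D.domain, ∃ y : ℕ → D.domain, (∀ n, ((y n : E)) ∈ S) ∧
      (∀ n, ‖(x : E) - y n‖ < 1 / ((n : ℝ) + 1) ∧ ‖D x - D (y n)‖ < 1 / ((n : ℝ) + 1)) := by
    intro x
    choose f h1 h2 h3 using fun n : ℕ => hcore.2 x (1 / ((n : ℝ) + 1)) (by positivity)
    exact ⟨f, h1, fun n => ⟨h2 n, h3 n⟩⟩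
  have coreSeq' : ∀ y : D'.domain, ∃ b : ℕ → D'.domain,
      (∀ n, ((b n : E')) ∈ S.map (U.toLinearEquiv : E →ₗ[ℂ] E')) ∧
      (∀ n, ‖(y : E') - b n‖ < 1 / ((n : ℝ) + 1) ∧ ‖D' y - D' (b n)‖ < 1 / ((n : ℝ) + 1)) := by
    intro y
    choose f h1 h2 h3 using fun n : ℕ => hcore'.2 y (1 / ((n : ℝ) + 1)) (by positivity)
    exact ⟨f, h1, fun n => ⟨h2 n, h3 n⟩⟩
  -- U maps the domain of D into the domain of D'
  have fwdMem : ∀ x ∈ D.domain, U x ∈ D'.domain := by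
    intro x hx
    obtain ⟨y, hyS, hyb⟩ := coreSeq ⟨x, hx⟩
    have hyb' : ∀ n, ‖x - (y n : E)‖ < 1 / ((n : ℝ) + 1) ∧
        ‖D ⟨x, hx⟩ - D (y n)‖ < 1 / ((n : ℝ) + 1) := hyb
    have hmem : ∀ n, U ((y n : E)) ∈ D'.domain := fun n => memS _ (hyS n)
    set u : ℕ → D'.domain := fun n => ⟨U ((y n : E)), hmem n⟩ with hu
    have hbd : ∀ n m N : ℕ, N ≤ n → N ≤ m →
        dist (D' (u n)) (D' (u m)) ≤ M * 4 * (1 / ((N : ℝ) + 1)) := by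
      intro n m N hn hm
      rw [dist_eq_norm, ← D'.map_sub]
      have hsub : ((u n - u m : D'.domain) : E') = U (((y n - y m : D.domain) : E)) := by
        simp [hu, map_sub]
      have hmem2 : U (((y n - y m : D.domain) : E)) ∈ D'.domain := hsub ▸ (u n - u m).2
      rw [pmap_congr D' (u n - u m) hmem2 hsub]
      have hb : ‖D' ⟨U (((y n - y m : D.domain) : E)), hmem2⟩‖ ≤
          M * (‖((y n - y m : D.domain) : E)‖ + ‖D (y n - y m)‖) := fwdB (y n - y m) hmem2
      have ecoe : ((y n - y m : D.domain) : E) = (y n : E) - (y m : E) := by simp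
      have e1 : ‖((y n - y m : D.domain) : E)‖ ≤ 2 * (1 / ((N : ℝ) + 1)) := by
        have h1 := (hyb' n).1; have h2 := (hyb' m).1
        rw [ecoe]
        calc ‖(y n : E) - (y m : E)‖ = ‖(x - (y m : E)) - (x - (y n : E))‖ := by congr 1; abel
          _ ≤ ‖x - (y m : E)‖ + ‖x - (y n : E)‖ := norm_sub_le _ _
          _ ≤ 2 * (1 / ((N : ℝ) + 1)) := by
              linarith [one_div_succ_le hn, one_div_succ_le hm]
      have e2 : ‖D (y n - y m)‖ ≤ 2 * (1 / ((N : ℝ) + 1)) := by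
        have h1 := (hyb' n).2; have h2 := (hyb' m).2
        rw [D.map_sub]
        calc ‖D (y n) - D (y m)‖
            = ‖(D ⟨x, hx⟩ - D (y m)) - (D ⟨x, hx⟩ - D (y n))‖ := by congr 1; abel
          _ ≤ ‖D ⟨x, hx⟩ - D (y m)‖ + ‖D ⟨x, hx⟩ - D (y n)‖ := norm_sub_le _ _
          _ ≤ 2 * (1 / ((N : ℝ) + 1)) := by
              linarith [one_div_succ_le hn, one_div_succ_le hm]
      have ht0 : (0 : ℝ) ≤ 1 / ((N : ℝ) + 1) := by positivity
      nlinarith [hb, e1, e2, hM]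
    have hb0 : Tendsto (fun N : ℕ => M * 4 * (1 / ((N : ℝ) + 1))) atTop (𝓝 0) := by
      simpa using tendsto_one_div_add_atTop_nhds_zero_nat.const_mul (M * 4)
    have hcauchy : CauchySeq fun n => D' (u n) := cauchySeq_of_le_tendsto_0 _ hbd hb0
    obtain ⟨w, hw⟩ := cauchySeq_tendsto_of_complete hcauchy
    have hxa : Tendsto (fun n => ((y n : E))) atTop (𝓝 x) :=
      tendsto_of_norm_lt fun n => (hyb' n).1
    have hUx : Tendsto (fun n => ((u n : E'))) atTop (𝓝 (U x)) :=
      (U.continuous.tendsto _).comp hxa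
    obtain ⟨hx', -⟩ := closed_limit hD'closed u hUx hw
    exact hx'
  -- the reverse bound, by contradiction using compactness
  have rev : ∃ c > (0 : ℝ), ∀ (a : D.domain) (ha : U (a : E) ∈ D'.domain),
      ‖(a : E)‖ + ‖D a‖ ≤ c * (‖U (a : E)‖ + ‖D' ⟨U (a : E), ha⟩‖) := by
    by_contra hcon
    push_neg at hcon
    have hsel : ∀ n : ℕ, ∃ (a : D.domain) (ha : U (a : E) ∈ D'.domain),
        ((n : ℝ) + 1) * (‖U (a : E)‖ + ‖D' ⟨U (a : E), ha⟩‖) < ‖(a : E)‖ + ‖D a‖ := by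
      intro n
      obtain ⟨a, ha, h⟩ := hcon ((n : ℝ) + 1) (by positivity)
      exact ⟨a, ha, h⟩
    choose a ha hlt using hsel
    choose z hz1 hz2 using fun n => key (a n) (ha n)
    have hzpos : ∀ n, 0 < ‖z n‖ := by
      intro n
      have h1 : 0 ≤ ((n : ℝ) + 1) * (‖U ((a n : E))‖ + ‖D' ⟨U ((a n : E)), ha n⟩‖) := by positivity
      have hab : 0 < ‖(a n : E)‖ + ‖D (a n)‖ := h1.trans_lt (hlt n)
      nlinarith [hz1 n, mul_pos hab hab, sq_nonneg (‖(a n : E)‖ - ‖D (a n)‖), norm_nonneg (z n)]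
    set t : ℕ → ℝ := fun n => ‖z n‖⁻¹ with ht
    have htpos : ∀ n, 0 < t n := fun n => inv_pos.mpr (hzpos n)
    have hts : ∀ n, t n * ‖z n‖ = 1 := fun n => inv_mul_cancel₀ (hzpos n).ne'
    have hAB2 : ∀ n, ‖(a n : E)‖ + ‖D (a n)‖ ≤ 2 * ‖z n‖ := by
      intro n
      nlinarith [hz1 n, norm_nonneg (z n), sq_nonneg (‖(a n : E)‖ - ‖D (a n)‖),
        norm_nonneg ((a n : E)), norm_nonneg (D (a n))]
    have hG : ∀ n, t n * (‖U ((a n : E))‖ + ‖D' ⟨U ((a n : E)), ha n⟩‖) ≤ 2 / ((n : ℝ) + 1) := by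
      intro n
      rw [le_div_iff₀ (by positivity)]
      have h1 : t n * (((n : ℝ) + 1) * (‖U ((a n : E))‖ + ‖D' ⟨U ((a n : E)), ha n⟩‖)) ≤
          t n * (‖(a n : E)‖ + ‖D (a n)‖) := mul_le_mul_of_nonneg_left (hlt n).le (htpos n).le
      have h2 : t n * (‖(a n : E)‖ + ‖D (a n)‖) ≤ t n * (2 * ‖z n‖) :=
        mul_le_mul_of_nonneg_left (hAB2 n) (htpos n).le
      have h3 : t n * (2 * ‖z n‖) = 2 := by
        rw [mul_comm (2 : ℝ), ← mul_assoc, hts n, one_mul]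
      nlinarith [h1, h2, h3]
    set d : ℕ → D.domain := fun n => ((t n : ℂ)) • a n with hd
    have hdcoe : ∀ n, ((d n : E)) = (t n : ℂ) • ((a n : E)) := fun n => rfl
    have hdD : ∀ n, D (d n) = (t n : ℂ) • D (a n) := fun n => D.map_smul _ _
    have hnormd : ∀ n, ‖((d n : E))‖ = t n * ‖(a n : E)‖ := by
      intro n; rw [hdcoe n]; simp [norm_smul, Real.norm_eq_abs, abs_of_pos (htpos n)]
    have hnormDd : ∀ n, ‖D (d n)‖ = t n * ‖D (a n)‖ := by
      intro n; rw [hdD n]; simp [norm_smul, Real.norm_eq_abs, abs_of_pos (htpos n)]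
    have htend2 : Tendsto (fun n : ℕ => 2 / ((n : ℝ) + 1)) atTop (𝓝 0) := by
      simpa [mul_one_div, div_eq_mul_inv] using tendsto_one_div_add_atTop_nhds_zero_nat.const_mul (2 : ℝ)
    set nUs : ℝ := ‖(U.symm : E' →L[ℂ] E)‖ with hnUs
    have hnUs0 : 0 ≤ nUs := norm_nonneg _
    have hd0 : Tendsto (fun n => ((d n : E))) atTop (𝓝 0) := by
      rw [tendsto_zero_iff_norm_tendsto_zero]
      refine squeeze_zero (fun n => norm_nonneg _) (fun n => ?_)
        (by simpa using htend2.const_mul nUs)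
      have e1 : ‖(a n : E)‖ ≤ nUs * ‖U ((a n : E))‖ := by
        calc ‖(a n : E)‖ = ‖U.symm (U ((a n : E)))‖ := by rw [U.symm_apply_apply]
          _ ≤ nUs * ‖U ((a n : E))‖ := (U.symm : E' →L[ℂ] E).le_opNorm _
      rw [hnormd n]
      have e2 : t n * ‖(a n : E)‖ ≤
          nUs * (t n * (‖U ((a n : E))‖ + ‖D' ⟨U ((a n : E)), ha n⟩‖)) := by
        nlinarith [e1, (htpos n).le, norm_nonneg (D' ⟨U ((a n : E)), ha n⟩),
          norm_nonneg (U ((a n : E))), hnUs0,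
          mul_nonneg (mul_nonneg hnUs0 (htpos n).le) (norm_nonneg (D' ⟨U ((a n : E)), ha n⟩))]
      exact e2.trans (mul_le_mul_of_nonneg_left (hG n) hnUs0)
    have hDd'0 : Tendsto (fun n => (t n : ℂ) • D' ⟨U ((a n : E)), ha n⟩) atTop (𝓝 0) := by
      rw [tendsto_zero_iff_norm_tendsto_zero]
      refine squeeze_zero (fun n => norm_nonneg _) (fun n => ?_) htend2
      have e3 : ‖(t n : ℂ) • D' ⟨U ((a n : E)), ha n⟩‖ = t n * ‖D' ⟨U ((a n : E)), ha n⟩‖ := by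
        simp [norm_smul, Real.norm_eq_abs, abs_of_pos (htpos n)]
      rw [e3]
      nlinarith [hG n, (htpos n).le, norm_nonneg (U ((a n : E)))]
    obtain ⟨K, hK, hKsub⟩ :=
      IsCompactOperator.image_closedBall_subset_compact (f := (C : E →ₗ[ℂ] F')) hC 1
    set w : ℕ → E := fun n => (t n : ℂ) • z n with hwdef
    have hwK : ∀ n, C (w n) ∈ K := by
      intro n
      apply hKsub
      refine ⟨w n, ?_, rfl⟩
      rw [Metric.mem_closedBall, dist_zero_right]
      have e4 : ‖w n‖ = t n * ‖z n‖ := by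
        simp [hwdef, norm_smul, Real.norm_eq_abs, abs_of_pos (htpos n)]
      rw [e4, hts n]
    obtain ⟨L, hLK, φ, hφ, hCL⟩ := hK.tendsto_subseq hwK
    have heq : ∀ n, D (d n) = V.symm ((t n : ℂ) • D' ⟨U ((a n : E)), ha n⟩ - C (w n)) := by
      intro n
      have h1 : C (w n) = (t n : ℂ) • C (z n) := C.map_smul _ _
      have h3 : (t n : ℂ) • V (D (a n)) = V ((t n : ℂ) • D (a n)) := (V.map_smul _ _).symm
      have h4 : (t n : ℂ) • D' ⟨U ((a n : E)), ha n⟩ - C (w n) = V ((t n : ℂ) • D (a n)) := by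
        rw [h1, hz2 n, smul_add, add_sub_cancel_right]
        exact h3
      rw [hdD n, h4, ContinuousLinearEquiv.symm_apply_apply]
    have hsub1 : Tendsto (fun k => ((d (φ k) : E))) atTop (𝓝 0) := hd0.comp hφ.tendsto_atTop
    have hsub2 : Tendsto (fun k => (t (φ k) : ℂ) • D' ⟨U ((a (φ k) : E)), ha (φ k)⟩)
        atTop (𝓝 0) := hDd'0.comp hφ.tendsto_atTop
    have hDdlim : Tendsto (fun k => D (d (φ k))) atTop (𝓝 (V.symm (0 - L))) := by
      have h5 : Tendsto (fun k => (t (φ k) : ℂ) • D' ⟨U ((a (φ k) : E)), ha (φ k)⟩ - C (w (φ k)))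
          atTop (𝓝 (0 - L)) := hsub2.sub hCL
      have h6 := (V.symm.continuous.tendsto _).comp h5
      exact h6.congr fun k => (heq (φ k)).symm
    obtain ⟨h0, hval⟩ := closed_limit hDclosed (fun k => d (φ k)) hsub1 hDdlim
    have hL0 : L = 0 := by
      have hz0 : D ⟨(0 : E), h0⟩ = 0 := by
        have e5 : (⟨(0 : E), h0⟩ : D.domain) = 0 := Subtype.ext rfl
        rw [e5]
        exact D.toFun.map_zero
      have h7 : V.symm (0 - L) = 0 := by rw [← hval, hz0]
      have h8 : (0 : F') - L = V 0 := by rw [← h7, V.apply_symm_apply]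
      simpa [zero_sub, neg_eq_zero] using h8
    have hDdlim0 : Tendsto (fun k => D (d (φ k))) atTop (𝓝 0) := by
      rw [hL0] at hDdlim
      simpa using hDdlim
    have hone : ∀ n, ‖((d n : E))‖ ^ 2 + ‖D (d n)‖ ^ 2 = 1 := by
      intro n
      rw [hnormd n, hnormDd n]
      linear_combination (-(t n) ^ 2) * hz1 n + (t n * ‖z n‖ + 1) * hts n
    have hlim1 : Tendsto (fun k => ‖((d (φ k) : E))‖ ^ 2 + ‖D (d (φ k))‖ ^ 2) atTop (𝓝 0) := by
      have := (hsub1.norm.pow 2).add (hDdlim0.norm.pow 2)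
      simpa using this
    have hlim2 : Tendsto (fun k => ‖((d (φ k) : E))‖ ^ 2 + ‖D (d (φ k))‖ ^ 2) atTop (𝓝 1) :=
      tendsto_const_nhds.congr fun k => (hone (φ k)).symm
    exact absurd (tendsto_nhds_unique hlim1 hlim2) (by norm_num)
  obtain ⟨c, hc0, hrev⟩ := rev
  -- U⁻¹ maps the domain of D' into the domain of D
  have revMem : ∀ y ∈ D'.domain, U.symm y ∈ D.domain := by
    intro y hy
    obtain ⟨b, hbS, hbb⟩ := coreSeq' ⟨y, hy⟩
    have hbb' : ∀ n, ‖y - (b n : E')‖ < 1 / ((n : ℝ) + 1) ∧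
        ‖D' ⟨y, hy⟩ - D' (b n)‖ < 1 / ((n : ℝ) + 1) := hbb
    have hex : ∀ n, ∃ x : E, x ∈ S ∧ U x = ((b n : E')) := by
      intro n
      obtain ⟨x, hxS, hxe⟩ := hbS n
      exact ⟨x, hxS, hxe⟩
    choose v hvS hve using hex
    have hvdom : ∀ n, v n ∈ D.domain := fun n => hcore.1 (hvS n)
    set g : ℕ → D.domain := fun n => ⟨v n, hvdom n⟩ with hg
    have hbd2 : ∀ n m N : ℕ, N ≤ n → N ≤ m →
        ‖((g n - g m : D.domain) : E)‖ + ‖D (g n - g m)‖ ≤ c * 4 * (1 / ((N : ℝ) + 1)) := by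
      intro n m N hn hm
      have hsub : U (((g n - g m : D.domain) : E)) = ((b n - b m : D'.domain) : E') := by
        simp [hg, map_sub, hve]
      have hmem2 : U (((g n - g m : D.domain) : E)) ∈ D'.domain := by
        rw [hsub]; exact (b n - b m).2
      have h8 : ‖((g n - g m : D.domain) : E)‖ + ‖D (g n - g m)‖ ≤
          c * (‖U (((g n - g m : D.domain) : E))‖ +
            ‖D' ⟨U (((g n - g m : D.domain) : E)), hmem2⟩‖) := hrev (g n - g m) hmem2
      have h9 : D' ⟨U (((g n - g m : D.domain) : E)), hmem2⟩ = D' (b n) - D' (b m) := by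
        rw [← pmap_congr D' (b n - b m) hmem2 hsub.symm, D'.map_sub]
      rw [h9, hsub] at h8
      have ecoe : ((b n - b m : D'.domain) : E') = (b n : E') - (b m : E') := by simp
      rw [ecoe] at h8
      have e1 : ‖(b n : E') - (b m : E')‖ ≤ 2 * (1 / ((N : ℝ) + 1)) := by
        have h1 := (hbb' n).1; have h2 := (hbb' m).1
        calc ‖(b n : E') - (b m : E')‖ = ‖(y - (b m : E')) - (y - (b n : E'))‖ := by congr 1; abel
          _ ≤ ‖y - (b m : E')‖ + ‖y - (b n : E')‖ := norm_sub_le _ _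
          _ ≤ 2 * (1 / ((N : ℝ) + 1)) := by
              linarith [one_div_succ_le hn, one_div_succ_le hm]
      have e2 : ‖D' (b n) - D' (b m)‖ ≤ 2 * (1 / ((N : ℝ) + 1)) := by
        have h1 := (hbb' n).2; have h2 := (hbb' m).2
        calc ‖D' (b n) - D' (b m)‖
            = ‖(D' ⟨y, hy⟩ - D' (b m)) - (D' ⟨y, hy⟩ - D' (b n))‖ := by congr 1; abel
          _ ≤ ‖D' ⟨y, hy⟩ - D' (b m)‖ + ‖D' ⟨y, hy⟩ - D' (b n)‖ := norm_sub_le _ _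
          _ ≤ 2 * (1 / ((N : ℝ) + 1)) := by
              linarith [one_div_succ_le hn, one_div_succ_le hm]
      have ht0 : (0 : ℝ) ≤ 1 / ((N : ℝ) + 1) := by positivity
      nlinarith [h8, e1, e2, hc0]
    have hb0 : Tendsto (fun N : ℕ => c * 4 * (1 / ((N : ℝ) + 1))) atTop (𝓝 0) := by
      simpa using tendsto_one_div_add_atTop_nhds_zero_nat.const_mul (c * 4)
    have hcau2 : CauchySeq fun n => D (g n) := by
      refine cauchySeq_of_le_tendsto_0 _ (fun n m N hn hm => ?_) hb0
      rw [dist_eq_norm, ← D.map_sub]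
      have := hbd2 n m N hn hm
      linarith [norm_nonneg (((g n - g m : D.domain) : E))]
    obtain ⟨gF, hgF⟩ := cauchySeq_tendsto_of_complete hcau2
    have hby : Tendsto (fun n => ((b n : E'))) atTop (𝓝 y) :=
      tendsto_of_norm_lt fun n => (hbb' n).1
    have hgx : Tendsto (fun n => ((g n : E))) atTop (𝓝 (U.symm y)) := by
      have h10 := (U.symm.continuous.tendsto y).comp hby
      refine h10.congr fun n => ?_
      show U.symm ((b n : E')) = ((g n : E))
      rw [← hve n, U.symm_apply_apply]
    obtain ⟨hx', -⟩ := closed_limit hDclosed g hgx hgF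
    exact hx'
  refine ⟨fwdMem, revMem, max (‖(U : E →L[ℂ] E')‖ + M) c + 1, ?_, ?_⟩
  · have h1 : (0 : ℝ) ≤ max (‖(U : E →L[ℂ] E')‖ + M) c := le_max_of_le_right hc0.le
    linarith
  · intro x hx hx'
    have hU1 : ‖U x‖ ≤ ‖(U : E →L[ℂ] E')‖ * ‖x‖ := (U : E →L[ℂ] E').le_opNorm x
    have hfb : ‖D' ⟨U x, hx'⟩‖ ≤ M * (‖x‖ + ‖D ⟨x, hx⟩‖) := fwdB ⟨x, hx⟩ hx'
    have hrb : ‖x‖ + ‖D ⟨x, hx⟩‖ ≤ c * (‖U x‖ + ‖D' ⟨U x, hx'⟩‖) := hrev ⟨x, hx⟩ hx'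
    constructor
    · have h2 : ‖(U : E →L[ℂ] E')‖ + M ≤ max (‖(U : E →L[ℂ] E')‖ + M) c := le_max_left _ _
      nlinarith [norm_nonneg x, norm_nonneg (D ⟨x, hx⟩), norm_nonneg (U x),
        norm_nonneg (D' ⟨U x, hx'⟩), norm_nonneg (U : E →L[ℂ] E'), hM]
    · have h2 : c ≤ max (‖(U : E →L[ℂ] E')‖ + M) c := le_max_right _ _
      nlinarith [norm_nonneg (U x), norm_nonneg (D' ⟨U x, hx'⟩), norm_nonneg x,
        norm_nonneg (D ⟨x, hx⟩)]

end
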